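/- arXiv:2008.06469 — 2 statements merged into one kernel-verified Lean document; each statement's English description precedes it below -/
import Mathlib

section
/- Let B_E be the set of partitions β_1 ≤ β_2 ≤ … ≤ β_n into positive parts such that β_1 ∈ {2, 3} and for 2 ≤ i ≤ n: if β_i is odd then 3 ≤ β_i − β_{i−1} ≤ 4, and if β_i is even then 0 ≤ β_i − β_{i−1} ≤ 1. Then for all integers n ≥ 2 and h ≥ 1, the polynomial ∑ q^{β_1 + … + β_n}, summed over all partitions in B_E with exactly n parts and largest part equal to 4h + 1, equals q^{2n + 2h² + h} · [n−2 choose h−1]_{q⁴}. -/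
open Finset PowerSeries

/-- `(q^j; q^j)_n = ∏_{i=0}^{n-1} (1 - q^{j(i+1)})` as a power series in `q`. -/
noncomputable def qPoch (j n : ℕ) : PowerSeries ℚ :=
  ∏ i ∈ Finset.range n, (1 - (PowerSeries.X : PowerSeries ℚ) ^ (j * (i + 1)))

/-- The Gaussian binomial coefficient `[A choose B]_{q^j}`, i.e.
`(q^j;q^j)_A / ((q^j;q^j)_B (q^j;q^j)_{A-B})` for `B ≤ A` and `0` otherwise. -/
noncomputable def gaussBinom (j A B : ℕ) : PowerSeries ℚ :=
  if B ≤ A then qPoch j A * (qPoch j B)⁻¹ * (qPoch j (A - B))⁻¹ else 0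

/-!
A partition in `B_E` is determined by the set `T` of positions of its odd parts: by parity, a step
`a → b` is forced to be `b = a + a % 2 + 3 * (b % 2)`, so with first part `2` the part in position
`i` is `2 + 4 * #{k ∈ T | k < i} + 3 * [i ∈ T]`. The quantity `(x + x % 2) % 4` is invariant along
a partition, so largest part `4h + 1` forces the first part to be `2`. Hence the last position lies
in `T`, `#T = h`, and `T = {n - 1} ∪ (S + 1)` for an `(h - 1)`-subset `S` of `{0, …, n - 3}`;
the parts then sum to `2n + 3h + 4 ∑_{s ∈ S} (n - 2 - s)`. By the `q`-Pascal recursion, the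
generating function of `b`-subsets of `{0, …, m - 1}` weighted by `q^{j ∑ (m - s)}` is
`q^{j (b+1 choose 2)} [m choose b]_{q^j}`.
-/

section GaussianBinomial

variable (j : ℕ)

lemma qPoch_zero : qPoch j 0 = 1 := prod_range_zero _

lemma qPoch_succ (n : ℕ) :
    qPoch j (n + 1) = qPoch j n * (1 - (X : PowerSeries ℚ) ^ (j * (n + 1))) :=
  prod_range_succ _ _

lemma constantCoeff_qPoch {j : ℕ} (hj : 0 < j) (n : ℕ) : constantCoeff (qPoch j n) = 1 := by
  simp [qPoch, hj.ne']

noncomputable def subsetGF (m b : ℕ) : PowerSeries ℚ :=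
  ∑ S ∈ (range m).powersetCard b, (X : PowerSeries ℚ) ^ (j * ∑ s ∈ S, (m - s))

lemma subsetGF_zero_right (m : ℕ) : subsetGF j m 0 = 1 := by
  simp [subsetGF]

lemma subsetGF_of_lt {m b : ℕ} (h : m < b) : subsetGF j m b = 0 := by
  rw [subsetGF, powersetCard_eq_empty.2 (by simpa using h), sum_empty]

lemma subsetGF_succ_succ (m b : ℕ) :
    subsetGF j (m + 1) (b + 1) =
      subsetGF j m (b + 1) + (X : PowerSeries ℚ) ^ (j * (m + 1)) * subsetGF j m b := by
  set shift : ℕ ↪ ℕ := ⟨(· + 1), add_left_injective 1⟩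
  have h0 (S : Finset ℕ) : 0 ∉ S.map shift := by simp [shift]
  have hweight (S : Finset ℕ) : ∑ k ∈ S.map shift, (m + 1 - k) = ∑ s ∈ S, (m - s) := by
    rw [sum_map]
    exact sum_congr rfl fun s _ => Nat.add_sub_add_right m 1 s
  rw [subsetGF, range_add_one', powersetCard_succ_insert (h0 _), sum_union, sum_image,
    powersetCard_map, sum_map, powersetCard_map, sum_map, subsetGF, subsetGF, mul_sum]
  · simp only [RelEmbedding.coe_toEmbedding, mapEmbedding_apply, sum_insert (h0 _), hweight,
      tsub_zero, mul_add, pow_add, Nat.succ_eq_add_one]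
  · intro S hS T hT hST
    simp only [mem_coe, mem_powersetCard] at hS hT
    rw [← erase_insert (fun h => h0 _ (hS.1 h)), hST, erase_insert (fun h => h0 _ (hT.1 h))]
  · refine disjoint_left.2 fun S hS hS' => ?_
    obtain ⟨T, -, rfl⟩ := mem_image.1 hS'
    exact h0 _ ((mem_powersetCard.1 hS).1 (mem_insert_self 0 T))

lemma subsetGF_mul_qPoch {m b : ℕ} (hbm : b ≤ m) :
    subsetGF j m b * qPoch j b * qPoch j (m - b) =
      (X : PowerSeries ℚ) ^ (j * (b + 1).choose 2) * qPoch j m := by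
  induction m generalizing b with
  | zero => simp [Nat.le_zero.1 hbm, subsetGF_zero_right, qPoch_zero]
  | succ m ih =>
    cases b with
    | zero => simp [subsetGF_zero_right, qPoch_zero]
    | succ b =>
      have hexp : j * (b + 1 + 1).choose 2 = j * (b + 1).choose 2 + j * (b + 1) := by
        rw [Nat.choose_succ_succ, Nat.choose_one_right]; ring
      rw [subsetGF_succ_succ, hexp, pow_add, Nat.add_sub_add_right, qPoch_succ j m,
        qPoch_succ j b]
      rcases (Nat.le_of_lt_succ hbm).eq_or_lt with rfl | hlt
      · have ih_self := ih le_rfl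
        rw [Nat.sub_self, qPoch_zero] at ih_self ⊢
        rw [subsetGF_of_lt j (Nat.lt_succ_self b)]
        linear_combination
          (X : PowerSeries ℚ) ^ (j * (b + 1)) * (1 - (X : PowerSeries ℚ) ^ (j * (b + 1))) * ih_self
      · obtain ⟨c, rfl⟩ : ∃ c, m = b + 1 + c := ⟨m - (b + 1), by omega⟩
        have ih_succ := ih hlt
        have ih_same := ih (by omega : b ≤ b + 1 + c)
        rw [hexp, pow_add, qPoch_succ j b, show b + 1 + c - (b + 1) = c by omega] at ih_succ
        rw [show b + 1 + c - b = c + 1 by omega, qPoch_succ j c] at ih_same ⊢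
        linear_combination (1 - (X : PowerSeries ℚ) ^ (j * (c + 1))) * ih_succ +
          (X : PowerSeries ℚ) ^ (j * (b + 1 + c + 1)) *
            (1 - (X : PowerSeries ℚ) ^ (j * (b + 1))) * ih_same

lemma subsetGF_eq_X_pow_mul_gaussBinom {j : ℕ} (hj : 0 < j) (m b : ℕ) :
    subsetGF j m b = (X : PowerSeries ℚ) ^ (j * (b + 1).choose 2) * gaussBinom j m b := by
  rw [gaussBinom]
  split_ifs with hbm
  · have hunit (n : ℕ) : qPoch j n * (qPoch j n)⁻¹ = 1 :=
      PowerSeries.mul_inv_cancel _ (by simp [constantCoeff_qPoch hj])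
    rw [← mul_assoc, ← mul_assoc, ← subsetGF_mul_qPoch j hbm]
    linear_combination (-(subsetGF j m b * (qPoch j (m - b) * (qPoch j (m - b))⁻¹))) * hunit b -
      subsetGF j m b * hunit (m - b)
  · rw [subsetGF_of_lt j (not_le.1 hbm), mul_zero]

lemma coeff_X_pow_mul_subsetGF (c m b N : ℕ) :
    coeff N ((X : PowerSeries ℚ) ^ c * subsetGF j m b) =
      #{S ∈ (range m).powersetCard b | c + j * ∑ s ∈ S, (m - s) = N} := by
  simp_rw [subsetGF, mul_sum, map_sum, ← pow_add, coeff_X_pow, eq_comm (a := N)]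
  rw [sum_boole]

end GaussianBinomial

def IsBasisStep (a b : ℕ) : Prop :=
  (Odd b → a + 3 ≤ b ∧ b ≤ a + 4) ∧ (Even b → a ≤ b ∧ b ≤ a + 1)

lemma isBasisStep_iff {a b : ℕ} : IsBasisStep a b ↔ b = a + a % 2 + 3 * (b % 2) := by
  simp only [IsBasisStep, Nat.odd_iff, Nat.even_iff]
  omega

lemma IsBasisStep.le {a b : ℕ} (h : IsBasisStep a b) : a ≤ b := by
  rw [isBasisStep_iff] at h
  omega

lemma IsBasisStep.mod_four {a b : ℕ} (h : IsBasisStep a b) :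
    (b + b % 2) % 4 = (a + a % 2) % 4 := by
  rw [isBasisStep_iff] at h
  omega

lemma eq_of_isChain_isBasisStep {l l' : List ℕ} (hl : l.IsChain IsBasisStep)
    (hl' : l'.IsChain IsBasisStep) (hhead : l.head? = l'.head?)
    (hpar : l.map (· % 2) = l'.map (· % 2)) : l = l' := by
  induction l generalizing l' with
  | nil => cases l' <;> simp_all
  | cons a t ih =>
    cases l' with
    | nil => simp at hhead
    | cons a' t' =>
      obtain rfl : a = a' := by simpa using hhead
      simp only [List.map_cons, List.cons.injEq, true_and] at hpar
      refine congrArg _ (ih hl.tail hl'.tail ?_ hpar)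
      match t, t', hpar with
      | [], [], _ => rfl
      | b :: _, b' :: _, hpar =>
        have hb := isBasisStep_iff.1 (List.isChain_cons_cons.1 hl).1
        have hb' := isBasisStep_iff.1 (List.isChain_cons_cons.1 hl').1
        simp only [List.map_cons, List.cons.injEq] at hpar
        simp only [List.head?_cons, Option.some.injEq]
        omega

-- Entering an odd position adds `3` to the part, and leaving it adds `1`.
def partEntry (T : Finset ℕ) (i : ℕ) : ℕ :=
  2 + 4 * #{k ∈ T | k < i} + if i ∈ T then 3 else 0

lemma partEntry_mod_two (T : Finset ℕ) (i : ℕ) :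
    partEntry T i % 2 = if i ∈ T then 1 else 0 := by
  unfold partEntry
  split_ifs <;> omega

lemma card_filter_lt_add_one (T : Finset ℕ) (i : ℕ) :
    #{k ∈ T | k < i + 1} = #{k ∈ T | k < i} + if i ∈ T then 1 else 0 := by
  split_ifs with hi
  · rw [← card_insert_of_notMem (s := {k ∈ T | k < i}) (a := i) (by simp)]
    congr 1
    ext k
    simp only [mem_filter, mem_insert]
    grind
  · congr 1
    ext k
    simp only [mem_filter]
    grind

lemma isBasisStep_partEntry (T : Finset ℕ) (i : ℕ) :
    IsBasisStep (partEntry T i) (partEntry T (i + 1)) := by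
  rw [isBasisStep_iff, partEntry_mod_two, partEntry_mod_two]
  unfold partEntry
  rw [card_filter_lt_add_one]
  split_ifs <;> omega

lemma sum_partEntry {T : Finset ℕ} {n : ℕ} (hT : T ⊆ range n) :
    ∑ i ∈ range n, partEntry T i = 2 * n + 3 * #T + 4 * ∑ k ∈ T, (n - 1 - k) := by
  have hcount : ∑ i ∈ range n, #{k ∈ T | k < i} = ∑ k ∈ T, (n - 1 - k) := by
    refine (sum_card_bipartiteAbove_eq_sum_card_bipartiteBelow (r := (· < ·))).symm.trans
      (sum_congr rfl fun k _ => ?_)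
    have : bipartiteAbove (· < ·) (range n) k = Ioo k n := by
      ext i
      simp only [bipartiteAbove, mem_filter, mem_range, mem_Ioo]
      omega
    rw [this, Nat.card_Ioo]
    omega
  simp only [partEntry, sum_add_distrib, sum_const, card_range, smul_eq_mul, ← mul_sum, hcount,
    sum_ite_mem, inter_eq_right.2 hT]
  ring

lemma sum_map_list_range {M : Type*} [AddCommMonoid M] (f : ℕ → M) (n : ℕ) :
    ((List.range n).map f).sum = ∑ i ∈ range n, f i := by
  rw [Finset.sum_eq_multiset_sum, Finset.range_val, Multiset.range, Multiset.map_coe,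
    Multiset.sum_coe]

def partList (T : Finset ℕ) (n : ℕ) : List ℕ := (List.range n).map (partEntry T)

lemma isChain_partList (T : Finset ℕ) (n : ℕ) : (partList T n).IsChain IsBasisStep := by
  rw [partList, List.isChain_map, List.isChain_range]
  exact fun i _ => isBasisStep_partEntry T i

-- The class `B_E`.
def IsBasisPartition (l : List ℕ) : Prop :=
  l.Pairwise (· ≤ ·) ∧ (∀ x ∈ l, 0 < x) ∧ (∀ x, l.head? = some x → x = 2 ∨ x = 3) ∧
    l.IsChain IsBasisStep

lemma isBasisPartition_of_isChain {l : List ℕ} (hl : l.IsChain IsBasisStep)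
    (hhead : l.head? = some 2) : IsBasisPartition l := by
  refine ⟨(hl.imp fun _ _ h => h.le).pairwise, fun x hx => ?_, by simp_all, hl⟩
  have := hl.induction (2 ≤ ·) l (fun _ _ h hx => hx.trans h.le)
    (fun hne => (Option.some.inj (hhead.symm.trans (List.head?_eq_some_head hne))).le) x hx
  omega

lemma IsBasisPartition.head_eq_two {l : List ℕ} (hl : IsBasisPartition l) {h : ℕ}
    (hlast : l.getLast? = some (4 * h + 1)) : l.head? = some 2 := by
  cases l with
  | nil => simp at hlast
  | cons a t =>
    -- `(x + x % 2) % 4` is `2` at `4 * h + 1` and at `2`, but `0` at `3`.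
    have hinv := hl.2.2.2.induction (fun x => (x + x % 2) % 4 = (a + a % 2) % 4) _
      (fun _ _ h hx => h.mod_four.trans hx) (fun _ => rfl) _ (List.mem_of_getLast? hlast)
    rcases hl.2.2.1 a rfl with rfl | rfl
    · rfl
    · omega

-- The odd positions of the partition encoded by `S ⊆ range (n - 2)`.
def basisOddSet (n : ℕ) (S : Finset ℕ) : Finset ℕ := insert (n - 1) (S.image (· + 1))

def basisPartition (n : ℕ) (S : Finset ℕ) : List ℕ := partList (basisOddSet n S) n

def basisIndexSet (n : ℕ) (l : List ℕ) : Finset ℕ :=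
  {s ∈ range (n - 2) | l.getD (s + 1) 0 % 2 = 1}

section basisPartition

variable {n : ℕ} {S : Finset ℕ}

lemma length_basisPartition : (basisPartition n S).length = n := by
  simp [basisPartition, partList]

lemma getElem?_basisPartition {i : ℕ} (hi : i < n) :
    (basisPartition n S)[i]? = some (partEntry (basisOddSet n S) i) := by
  simp [basisPartition, partList, hi]

lemma sub_one_mem_basisOddSet : n - 1 ∈ basisOddSet n S := mem_insert_self _ _

lemma zero_notMem_basisOddSet (hn : 2 ≤ n) : 0 ∉ basisOddSet n S := by
  simp only [basisOddSet, mem_insert, mem_image, Nat.add_eq_zero_iff, one_ne_zero, and_false,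
    exists_const, or_false]
  omega

lemma add_one_mem_basisOddSet_iff {s : ℕ} (hs : s + 1 ≠ n - 1) :
    s + 1 ∈ basisOddSet n S ↔ s ∈ S := by
  simp [basisOddSet, hs]

lemma head?_basisPartition (hn : 2 ≤ n) : (basisPartition n S).head? = some 2 := by
  rw [List.head?_eq_getElem?, getElem?_basisPartition (by omega), partEntry,
    if_neg (zero_notMem_basisOddSet hn)]
  simp

lemma getD_basisPartition_mod_two {s : ℕ} (hs : s < n - 2) :
    (basisPartition n S).getD (s + 1) 0 % 2 = if s ∈ S then 1 else 0 := by
  rw [List.getD_eq_getElem?_getD, getElem?_basisPartition (by omega), Option.getD_some,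
    partEntry_mod_two]
  simp only [add_one_mem_basisOddSet_iff (show s + 1 ≠ n - 1 by omega)]

variable (hS : S ⊆ range (n - 2))
include hS

lemma filter_lt_basisOddSet : {k ∈ basisOddSet n S | k < n - 1} = S.image (· + 1) := by
  ext k
  simp only [basisOddSet, mem_filter, mem_insert, mem_image]
  constructor
  · rintro ⟨rfl | h, hk⟩
    · omega
    · exact h
  · rintro ⟨s, hs, rfl⟩
    have := mem_range.1 (hS hs)
    exact ⟨Or.inr ⟨s, hs, rfl⟩, by omega⟩

lemma getLast?_basisPartition (hn : 2 ≤ n) :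
    (basisPartition n S).getLast? = some (4 * #S + 5) := by
  rw [List.getLast?_eq_getElem?, length_basisPartition, getElem?_basisPartition (by omega),
    partEntry, filter_lt_basisOddSet hS, card_image_of_injective _ (add_left_injective 1),
    if_pos sub_one_mem_basisOddSet]
  ring_nf

lemma sum_basisPartition (hn : 2 ≤ n) :
    (basisPartition n S).sum = 2 * n + 3 * (#S + 1) + 4 * ∑ s ∈ S, (n - 2 - s) := by
  have hnot : n - 1 ∉ S.image (· + 1) := fun hmem => by
    obtain ⟨s, hs, hs1⟩ := mem_image.1 hmem
    have := mem_range.1 (hS hs)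
    omega
  have hsub : basisOddSet n S ⊆ range n :=
    insert_subset (mem_range.2 (by omega)) (image_subset_iff.2 fun s hs => mem_range.2 <| by
      have := mem_range.1 (hS hs)
      omega)
  rw [basisPartition, partList, sum_map_list_range, sum_partEntry hsub, basisOddSet,
    card_insert_of_notMem hnot, sum_insert hnot, sum_image (fun _ _ _ _ => Nat.add_right_cancel),
    card_image_of_injective _ (add_left_injective 1), Nat.sub_self, zero_add]
  congr 2
  exact sum_congr rfl fun s _ => by omega

lemma basisIndexSet_basisPartition : basisIndexSet n (basisPartition n S) = S := by
  ext s
  simp only [basisIndexSet, mem_filter, mem_range]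
  constructor
  · rintro ⟨hs, hodd⟩
    rw [getD_basisPartition_mod_two hs] at hodd
    simpa using hodd
  · intro hs
    have hs' := mem_range.1 (hS hs)
    exact ⟨hs', by rw [getD_basisPartition_mod_two hs', if_pos hs]⟩

end basisPartition

lemma eq_basisPartition_basisIndexSet {n h : ℕ} {l : List ℕ} (hn : 2 ≤ n)
    (hl : IsBasisPartition l) (hlen : l.length = n) (hlast : l.getLast? = some (4 * h + 1)) :
    l = basisPartition n (basisIndexSet n l) := by
  refine eq_of_isChain_isBasisStep hl.2.2.2 (isChain_partList _ _)
    ((hl.head_eq_two hlast).trans (head?_basisPartition hn).symm) (List.ext_getElem? fun i => ?_)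
  rcases lt_or_ge i n with hi | hi
  swap
  · simp [basisPartition, partList, hlen, hi]
  rw [List.getElem?_map, List.getElem?_map, getElem?_basisPartition hi, Option.map_some,
    partEntry_mod_two]
  rcases i with _ | s
  · rw [← List.head?_eq_getElem?, hl.head_eq_two hlast, if_neg (zero_notMem_basisOddSet hn)]
    rfl
  rcases (Nat.lt_or_ge (s + 1) (n - 1)) with hs | hs
  · rw [List.getElem?_eq_getElem (by omega), Option.map_some]
    simp only [add_one_mem_basisOddSet_iff (show s + 1 ≠ n - 1 by omega), basisIndexSet,
      mem_filter, mem_range, List.getD_eq_getElem _ _ (show s + 1 < l.length by omega)]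
    split_ifs <;> (congr 1; omega)
  · rw [show s + 1 = n - 1 by omega, if_pos sub_one_mem_basisOddSet, ← hlen,
      ← List.getLast?_eq_getElem?, hlast, Option.map_some]
    congr 1
    omega

lemma exists_basisPartition_iff {n h : ℕ} (hn : 2 ≤ n) (hh : 1 ≤ h) {l : List ℕ} :
    IsBasisPartition l ∧ l.length = n ∧ l.getLast? = some (4 * h + 1) ↔
      ∃ S ∈ (range (n - 2)).powersetCard (h - 1), basisPartition n S = l := by
  constructor
  · rintro ⟨hl, hlen, hlast⟩
    have hS : basisIndexSet n l ⊆ range (n - 2) := filter_subset _ _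
    have heq := eq_basisPartition_basisIndexSet hn hl hlen hlast
    refine ⟨basisIndexSet n l, mem_powersetCard.2 ⟨hS, ?_⟩, heq.symm⟩
    rw [heq, getLast?_basisPartition hS hn, Option.some.injEq] at hlast
    omega
  · rintro ⟨S, hS, rfl⟩
    obtain ⟨hS, hcard⟩ := mem_powersetCard.1 hS
    refine ⟨isBasisPartition_of_isChain (isChain_partList _ _) (head?_basisPartition hn),
      length_basisPartition, ?_⟩
    rw [getLast?_basisPartition hS hn, hcard, Option.some.injEq]
    omega

lemma ncard_basisPartitions {n h : ℕ} (hn : 2 ≤ n) (hh : 1 ≤ h) (N : ℕ) :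
    {l | IsBasisPartition l ∧ l.length = n ∧ l.getLast? = some (4 * h + 1) ∧ l.sum = N}.ncard =
      #{S ∈ (range (n - 2)).powersetCard (h - 1) |
        2 * n + 3 * h + 4 * ∑ s ∈ S, (n - 2 - s) = N} := by
  have hsum {S : Finset ℕ} (hS : S ∈ (range (n - 2)).powersetCard (h - 1)) :
      (basisPartition n S).sum = 2 * n + 3 * h + 4 * ∑ s ∈ S, (n - 2 - s) := by
    obtain ⟨hS, hcard⟩ := mem_powersetCard.1 hS
    rw [sum_basisPartition hS hn, hcard, Nat.sub_add_cancel hh]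
  have hset : {l | IsBasisPartition l ∧ l.length = n ∧ l.getLast? = some (4 * h + 1) ∧
      l.sum = N} = basisPartition n '' ↑({S ∈ (range (n - 2)).powersetCard (h - 1) |
        2 * n + 3 * h + 4 * ∑ s ∈ S, (n - 2 - s) = N} : Finset (Finset ℕ)) := by
    ext l
    simp only [Set.mem_ofPred_eq, Set.mem_image, coe_filter, ← and_assoc,
      exists_basisPartition_iff hn hh]
    constructor
    · rintro ⟨⟨S, hS, rfl⟩, hN⟩
      exact ⟨S, ⟨hS, (hsum hS).symm.trans hN⟩, rfl⟩
    · rintro ⟨S, ⟨hS, hN⟩, rfl⟩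
      exact ⟨⟨S, hS, rfl⟩, (hsum hS).trans hN⟩
  rw [hset, Set.InjOn.ncard_image, Set.ncard_coe_finset]
  intro S hS S' hS' heq
  rw [← basisIndexSet_basisPartition (mem_powersetCard.1 (mem_filter.1 hS).1).1, heq,
    basisIndexSet_basisPartition (mem_powersetCard.1 (mem_filter.1 hS').1).1]

/-- the generating function (stated coefficientwise) for the
basis partitions of the Glasgow SIP class with `n` parts and largest part
`4h + 1` is `q^{2n+2h²+h} [n−2 choose h−1]_{q⁴}`. -/
theorem stmt11 (n h : ℕ) (hn : 2 ≤ n) (hh : 1 ≤ h) (N : ℕ) :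
    ({l : List ℕ | l.Pairwise (· ≤ ·) ∧ (∀ x ∈ l, 0 < x) ∧
      (∀ x, l.head? = some x → x = 2 ∨ x = 3) ∧
      l.Chain' (fun a b =>
        (Odd b → a + 3 ≤ b ∧ b ≤ a + 4) ∧ (Even b → a ≤ b ∧ b ≤ a + 1)) ∧
      l.length = n ∧ l.getLast? = some (4 * h + 1) ∧
      l.sum = N}).ncard =
    PowerSeries.coeff (R := ℚ) N
      ((PowerSeries.X : PowerSeries ℚ) ^ (2 * n + 2 * h ^ 2 + h) *
        gaussBinom 4 (n - 2) (h - 1)) := by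
  have hexp : 2 * n + 2 * h ^ 2 + h = 2 * n + 3 * h + 4 * (h - 1 + 1).choose 2 := by
    obtain ⟨b, rfl⟩ := Nat.exists_eq_add_of_le' hh
    have := Nat.add_one_mul_choose_eq b 1
    rw [Nat.choose_one_right] at this
    rw [Nat.add_sub_cancel]
    linarith
  rw [hexp, pow_add, mul_assoc, ← subsetGF_eq_X_pow_mul_gaussBinom (by norm_num),
    coeff_X_pow_mul_subsetGF, ← ncard_basisPartitions hn hh N]
  simp only [IsBasisPartition, and_assoc]
  rfl
end

section
/- For every positive integer v, the number of partitions of v with n copies of n in which, when the parts are listed in ascending lexicographic order, the weighted difference between each pair of consecutive parts is exactly 0 and the smallest part has its value equal to its subscript (i.e., is of the form j_j), equals the coefficient of q^v in the series ∑_{n≥0} q^{n²} / (q;q²)_n. -/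
/-!
Vanishing weighted differences force `m_{k+1} = m_k + i_k + i_{k+1}`, so a partition whose smallest
part is `j_j` is determined by its subscripts `i_1, …, i_n ≥ 1`, and it is a partition of
`∑ₖ (2(n - k) + 1) i_k`. Writing `i_k = b_k + 1` splits off `1 + 3 + ⋯ + (2n - 1) = n²`, and the
lists `b` are counted by `1 / (q; q²)_n`: the entry `b_k` contributes the multiple
`(2(n - k) + 1) b_k` picked from the factor `1 / (1 - q^{2(n - k) + 1})`.
-/

open Finset

/-- Lexicographic order on parts `m_i = (m, i)` of a partition with n copies of n. -/
def LexLe (p q : ℕ × ℕ) : Prop := p.1 < q.1 ∨ (p.1 = q.1 ∧ p.2 ≤ q.2)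

open PowerSeries

namespace PowerSeries

theorem mk_dvd_mul_one_sub_X_pow {R : Type*} [Ring R] {d : ℕ} (hd : d ≠ 0) :
    (mk fun k => if d ∣ k then (1 : R) else 0) * (1 - X ^ d) = 1 := by
  ext m
  rw [mul_sub, mul_one, map_sub, coeff_mul_X_pow', coeff_mk, coeff_one]
  rcases lt_or_ge m d with hm | hm
  · simp [hm.not_ge, Nat.dvd_iff_mod_eq_zero, Nat.mod_eq_of_lt hm]
  · have : d ∣ m - d ↔ d ∣ m := by
      simpa [Nat.sub_add_cancel hm] using (Nat.dvd_add_self_right (m := d) (n := m - d)).symm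
    simp [hm, this, show m ≠ 0 by omega]

theorem inv_prod_one_sub_X_pow {ι k : Type*} [Field k] (s : Finset ι) {f : ι → ℕ}
    (hf : ∀ i ∈ s, f i ≠ 0) :
    (∏ i ∈ s, (1 - X ^ f i : k⟦X⟧))⁻¹ = ∏ i ∈ s, mk fun m => if f i ∣ m then 1 else 0 := by
  rw [eq_comm, PowerSeries.eq_inv_iff_mul_eq_one, ← prod_mul_distrib]
  · exact prod_eq_one fun i hi => mk_dvd_mul_one_sub_X_pow (hf i hi)
  · rw [map_prod]
    exact prod_ne_zero_iff.2 fun i hi => by simp [hf i hi]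

end PowerSeries

namespace NCopyPartition

def oddWeightSum : List ℕ → ℕ
  | [] => 0
  | a :: t => (2 * t.length + 1) * a + oddWeightSum t

theorem oddWeightSum_map_succ (l : List ℕ) :
    oddWeightSum (l.map (· + 1)) = oddWeightSum l + l.length ^ 2 := by
  induction l with
  | nil => rfl
  | cons a t ih =>
    simp only [oddWeightSum, List.map_cons, List.length_map, List.length_cons, ih]
    ring

def oddWeightLists : ℕ → ℕ → Finset (List ℕ)
  | 0, M => if M = 0 then {[]} else ∅
  | n + 1, M => ((range (M + 1)).filter ((2 * n + 1) ∣ ·)).biUnion fun d =>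
      (oddWeightLists n (M - d)).image (d / (2 * n + 1) :: ·)

theorem mem_oddWeightLists {n M : ℕ} {l : List ℕ} :
    l ∈ oddWeightLists n M ↔ l.length = n ∧ oddWeightSum l = M := by
  induction n generalizing M l with
  | zero =>
    by_cases hM : M = 0 <;> cases l <;> simp [oddWeightLists, oddWeightSum, hM, eq_comm]
  | succ n ih =>
    cases l with
    | nil => simp [oddWeightLists]
    | cons a t =>
      simp only [oddWeightLists, mem_biUnion, mem_filter, mem_range, mem_image, ih,
        List.cons.injEq, oddWeightSum, List.length_cons, add_left_inj]
      constructor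
      · rintro ⟨d, ⟨hdM, hd⟩, t, ⟨rfl, ht⟩, rfl, rfl⟩
        rw [Nat.mul_div_cancel' hd]
        omega
      · rintro ⟨rfl, rfl⟩
        refine ⟨(2 * t.length + 1) * a, ⟨by omega, dvd_mul_right _ _⟩, t, ⟨rfl, by omega⟩, ?_, rfl⟩
        exact Nat.mul_div_cancel_left a (by omega)

theorem card_oddWeightLists_succ (n M : ℕ) :
    #(oddWeightLists (n + 1) M) =
      ∑ d ∈ range (M + 1) with (2 * n + 1) ∣ d, #(oddWeightLists n (M - d)) := by
  rw [oddWeightLists, card_biUnion]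
  · exact sum_congr rfl fun d _ => card_image_of_injective _ List.cons_injective
  · intro d₁ hd₁ d₂ hd₂ hne
    simp only [Function.onFun, disjoint_left, mem_image, not_exists, not_and]
    rintro _ ⟨t₁, -, rfl⟩ t₂ - heq
    exact hne ((Nat.div_left_inj (mem_filter.1 hd₁).2 (mem_filter.1 hd₂).2).1
      (List.cons.inj heq).1.symm)

theorem coeff_prod_mk_dvd_odd {R : Type*} [CommSemiring R] (n M : ℕ) :
    coeff M (∏ i ∈ range n, mk fun m => if (2 * i + 1) ∣ m then (1 : R) else 0) =
      #(oddWeightLists n M) := by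
  induction n generalizing M with
  | zero => by_cases hM : M = 0 <;> simp [oddWeightLists, coeff_one, hM]
  | succ n ih =>
    rw [prod_range_succ, mul_comm, coeff_mul, Nat.sum_antidiagonal_eq_sum_range_succ_mk,
      card_oddWeightLists_succ, sum_filter, Nat.cast_sum]
    refine sum_congr rfl fun d _ => ?_
    simp only [coeff_mk, ih]
    split_ifs <;> simp

def zeroDiffParts : ℕ → List ℕ → List (ℕ × ℕ)
  | _, [] => []
  | s, a :: t => (s + a, a) :: zeroDiffParts (s + 2 * a) t

theorem map_snd_zeroDiffParts (s : ℕ) (i : List ℕ) : (zeroDiffParts s i).map Prod.snd = i := by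
  induction i generalizing s <;> simp [zeroDiffParts, *]

theorem zeroDiffParts_injective (s : ℕ) : (zeroDiffParts s).Injective :=
  Function.LeftInverse.injective (map_snd_zeroDiffParts s)

theorem snd_mem_of_mem_zeroDiffParts {s : ℕ} {i : List ℕ} {p : ℕ × ℕ}
    (hp : p ∈ zeroDiffParts s i) : p.2 ∈ i :=
  map_snd_zeroDiffParts s i ▸ List.mem_map_of_mem hp

theorem sum_map_fst_zeroDiffParts (s : ℕ) (i : List ℕ) :
    ((zeroDiffParts s i).map Prod.fst).sum = s * i.length + oddWeightSum i := by
  induction i generalizing s with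
  | nil => simp [zeroDiffParts, oddWeightSum]
  | cons a t ih =>
    simp only [zeroDiffParts, List.map_cons, List.sum_cons, ih, oddWeightSum, List.length_cons]
    ring

theorem add_snd_le_fst_of_mem_zeroDiffParts {s : ℕ} {i : List ℕ} {p : ℕ × ℕ}
    (hp : p ∈ zeroDiffParts s i) : s + p.2 ≤ p.1 := by
  induction i generalizing s with
  | nil => simp [zeroDiffParts] at hp
  | cons a t ih =>
    rcases List.mem_cons.1 hp with rfl | hp
    · exact le_rfl
    · have := ih hp
      omega

theorem pairwise_fst_lt_zeroDiffParts (s : ℕ) {i : List ℕ} (hi : ∀ x ∈ i, 1 ≤ x) :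
    (zeroDiffParts s i).Pairwise fun p q => p.1 < q.1 := by
  induction i generalizing s with
  | nil => exact .nil
  | cons a t ih =>
    refine List.pairwise_cons.2 ⟨fun p hp => ?_, ih _ fun x hx => hi x (.tail _ hx)⟩
    have hp₂ : 1 ≤ p.2 := hi _ (.tail _ (snd_mem_of_mem_zeroDiffParts hp))
    have := add_snd_le_fst_of_mem_zeroDiffParts hp
    omega

theorem isChain_zeroDiffParts (s : ℕ) (i : List ℕ) :
    (zeroDiffParts s i).IsChain fun p q => (q.1 : ℤ) - p.1 - q.2 - p.2 = 0 := by
  induction i generalizing s with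
  | nil => exact .nil
  | cons a t ih =>
    cases t with
    | nil => exact .singleton _
    | cons b t =>
      refine .cons_cons ?_ (ih _)
      push_cast [zeroDiffParts]
      ring

theorem zeroDiffParts_map_snd {s : ℕ} {l : List (ℕ × ℕ)}
    (hhead : ∀ p, l.head? = some p → p.1 = s + p.2)
    (hl : l.IsChain fun p q => (q.1 : ℤ) - p.1 - q.2 - p.2 = 0) :
    zeroDiffParts s (l.map Prod.snd) = l := by
  induction l generalizing s with
  | nil => rfl
  | cons p t ih =>
    obtain ⟨hnext, ht⟩ := List.isChain_cons.1 hl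
    have hp := hhead p rfl
    rw [List.map_cons, zeroDiffParts, ← hp,
      ih (fun q hq => by have := hnext q hq; omega) ht]

theorem setOf_eq_image_zeroDiffParts (v : ℕ) :
    {l : List (ℕ × ℕ) | l.Pairwise LexLe ∧ (∀ p ∈ l, 1 ≤ p.2 ∧ p.2 ≤ p.1) ∧
      (∀ p : ℕ × ℕ, l.head? = some p → p.1 = p.2) ∧
      l.Chain' (fun p q => (q.1 : ℤ) - (p.1 : ℤ) - (q.2 : ℤ) - (p.2 : ℤ) = 0) ∧
      (l.map Prod.fst).sum = v} =
    zeroDiffParts 0 '' {i | (∀ x ∈ i, 1 ≤ x) ∧ oddWeightSum i = v} := by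
  ext l
  constructor
  · rintro ⟨-, hbounds, hhead, hchain, hsum⟩
    have hl : zeroDiffParts 0 (l.map Prod.snd) = l :=
      zeroDiffParts_map_snd (fun p hp => (hhead p hp).trans (zero_add _).symm) hchain
    refine ⟨l.map Prod.snd, ⟨?_, ?_⟩, hl⟩
    · intro x hx
      obtain ⟨p, hp, rfl⟩ := List.mem_map.1 hx
      exact (hbounds p hp).1
    · have := sum_map_fst_zeroDiffParts 0 (l.map Prod.snd)
      rw [hl, hsum] at this
      omega
  · rintro ⟨i, ⟨hi, hsum⟩, rfl⟩
    refine ⟨(pairwise_fst_lt_zeroDiffParts 0 hi).imp Or.inl, fun p hp => ⟨?_, ?_⟩, ?_,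
      isChain_zeroDiffParts 0 i, by simp [sum_map_fst_zeroDiffParts, hsum]⟩
    · exact hi _ (snd_mem_of_mem_zeroDiffParts hp)
    · simpa using add_snd_le_fst_of_mem_zeroDiffParts hp
    · cases i <;> simp [zeroDiffParts]

theorem sq_length_le_oddWeightSum {i : List ℕ} (hi : ∀ x ∈ i, 1 ≤ x) :
    i.length ^ 2 ≤ oddWeightSum i := by
  induction i with
  | nil => exact le_rfl
  | cons a t ih =>
    have ha := hi a (.head _)
    have := ih fun x hx => hi x (.tail _ hx)
    simp only [List.length_cons, oddWeightSum]
    nlinarith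

theorem mem_image_map_succ_oddWeightLists {n M : ℕ} {i : List ℕ} :
    i ∈ (oddWeightLists n M).image (List.map (· + 1)) ↔
      (∀ x ∈ i, 1 ≤ x) ∧ i.length = n ∧ oddWeightSum i = M + n ^ 2 := by
  simp only [mem_image, mem_oddWeightLists]
  constructor
  · rintro ⟨b, ⟨rfl, rfl⟩, rfl⟩
    simp [oddWeightSum_map_succ]
  · rintro ⟨hi, rfl, hsum⟩
    have hpred : (i.map (· - 1)).map (· + 1) = i := by
      rw [List.map_map]
      exact List.map_congr_left (fun x hx => Nat.sub_add_cancel (hi x hx)) |>.trans (List.map_id' i)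
    refine ⟨i.map (· - 1), ⟨by simp, ?_⟩, hpred⟩
    have := oddWeightSum_map_succ (i.map (· - 1))
    rw [hpred, List.length_map] at this
    omega

theorem ncard_setOf_oddWeightSum (v : ℕ) :
    {i : List ℕ | (∀ x ∈ i, 1 ≤ x) ∧ oddWeightSum i = v}.ncard =
      ∑ n ∈ range (v + 1) with n ^ 2 ≤ v, #(oddWeightLists n (v - n ^ 2)) := by
  have hset : {i : List ℕ | (∀ x ∈ i, 1 ≤ x) ∧ oddWeightSum i = v} =
      ↑(((range (v + 1)).filter (· ^ 2 ≤ v)).biUnion fun n =>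
        (oddWeightLists n (v - n ^ 2)).image (List.map (· + 1))) := by
    ext i
    simp only [Set.mem_ofPred_eq, coe_biUnion, coe_filter, mem_range, Set.mem_iUnion, mem_coe,
      mem_image_map_succ_oddWeightLists, exists_prop]
    constructor
    · rintro ⟨hi, hsum⟩
      have := sq_length_le_oddWeightSum hi
      have : i.length ≤ i.length ^ 2 := Nat.le_self_pow two_ne_zero _
      exact ⟨i.length, by omega, hi, rfl, by omega⟩
    · rintro ⟨n, ⟨-, hn⟩, hi, -, hsum⟩
      exact ⟨hi, by omega⟩
  rw [hset, Set.ncard_coe_finset, card_biUnion]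
  · exact sum_congr rfl fun n _ =>
      card_image_of_injective _ (List.map_injective_iff.2 (add_left_injective 1))
  · intro n₁ _ n₂ _ hne
    simp only [Function.onFun, disjoint_left, mem_image_map_succ_oddWeightLists]
    rintro i ⟨-, rfl, -⟩ ⟨-, h, -⟩
    exact hne h

end NCopyPartition

open NCopyPartition in
theorem stmt17_general (v : ℕ) :
    ({l : List (ℕ × ℕ) | l.Pairwise LexLe ∧ (∀ p ∈ l, 1 ≤ p.2 ∧ p.2 ≤ p.1) ∧
      (∀ p : ℕ × ℕ, l.head? = some p → p.1 = p.2) ∧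
      l.Chain' (fun p q => (q.1 : ℤ) - (p.1 : ℤ) - (q.2 : ℤ) - (p.2 : ℤ) = 0) ∧
      (l.map Prod.fst).sum = v}.ncard : ℚ) =
    PowerSeries.coeff v (∑ n ∈ Finset.range (v + 1),
      (PowerSeries.X : PowerSeries ℚ) ^ (n ^ 2) *
        (∏ i ∈ Finset.range n, (1 - (PowerSeries.X : PowerSeries ℚ) ^ (2 * i + 1)))⁻¹) := by
  rw [setOf_eq_image_zeroDiffParts, Set.ncard_image_of_injective _ (zeroDiffParts_injective 0),
    ncard_setOf_oddWeightSum, map_sum, Nat.cast_sum, sum_filter]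
  refine sum_congr rfl fun n _ => ?_
  rw [coeff_X_pow_mul', inv_prod_one_sub_X_pow _ fun i _ => (2 * i).succ_ne_zero,
    coeff_prod_mk_dvd_odd]

/-- the third order mock theta function
`ψ₃(q) = ∑_n q^{n²}/(q;q²)_n` generates partitions with n copies of n with all
consecutive weighted differences 0 and smallest part of the form `j_j`.  Since
the `n`-th term has order at least `n`, the sum may be truncated at `n = v`
when extracting the coefficient of `q^v`. -/
theorem stmt17 (v : ℕ) (hv : 0 < v) :
    ({l : List (ℕ × ℕ) | l.Pairwise LexLe ∧ (∀ p ∈ l, 1 ≤ p.2 ∧ p.2 ≤ p.1) ∧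
      (∀ p : ℕ × ℕ, l.head? = some p → p.1 = p.2) ∧
      l.Chain' (fun p q => (q.1 : ℤ) - (p.1 : ℤ) - (q.2 : ℤ) - (p.2 : ℤ) = 0) ∧
      (l.map Prod.fst).sum = v}.ncard : ℚ) =
    PowerSeries.coeff v (∑ n ∈ Finset.range (v + 1),
      (PowerSeries.X : PowerSeries ℚ) ^ (n ^ 2) *
        (∏ i ∈ Finset.range n, (1 - (PowerSeries.X : PowerSeries ℚ) ^ (2 * i + 1)))⁻¹) :=
  stmt17_general v
end
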